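/- Let k ∈ ℕ and let u, v be finite words over a finite alphabet Σ such that u ≡prefFO_{k+1} v. Then there exist finite words u', v' such that u·u' ≡FO_k v and u ≡FO_k v·v'. -/

import Mathlib

set_option maxHeartbeats 1000000

namespace PrefSynth

/-! ### Possibly infinite words -/

/-- A (finite or infinite) word over alphabet `A`: positions carrying `some` letter. -/
abbrev Word (A : Type) : Type := ℕ → Option A

/-- `m` is a position of the word `w`. -/
def Word.pos {A : Type} (w : Word A) (m : ℕ) : Prop := w m ≠ none

/-- A genuine word: its domain is downward closed. -/
def Word.Closed {A : Type} (w : Word A) : Prop :=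
  ∀ i j : ℕ, i ≤ j → w j ≠ none → w i ≠ none

/-- The finite word given by a list. -/
def Word.ofList {A : Type} (l : List A) : Word A := fun i => l[i]?

/-- The infinite word given by a function. -/
def Word.ofFun {A : Type} (u : ℕ → A) : Word A := fun i => some (u i)

/-- The prefix of a word consisting of its first `n` positions; `Word.take w (m+1)`
is `w[0…m]`. -/
def Word.take {A : Type} (w : Word A) (n : ℕ) : Word A :=
  fun i => if i < n then w i else none

/-- `u` is a prefix of `v`. -/
def Word.IsPrefix {A : Type} (u v : Word A) : Prop :=
  ∀ i, u i ≠ none → v i = u i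

/-! ### Prefix first-order logic on words

Formulas in context `n`: the free variables are `Fin n`; when `n ≥ 1`, the variable
`0` is the bounding variable `x̄`, all other variables are prefix variables, and
every quantifier is of the form `∃ x < x̄` (new variables are appended at the end,
i.e. interpreted through `Fin.snoc`). -/

inductive PFm (A : Type) : ℕ → Type where
  | eq {n} : Fin n → Fin n → PFm A n
  | lt {n} : Fin n → Fin n → PFm A n
  | letter {n} : A → Fin n → PFm A n
  | and {n} : PFm A n → PFm A n → PFm A n
  | not {n} : PFm A n → PFm A n
  | exlt {n} : PFm A (n + 2) → PFm A (n + 1)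

/-- Quantifier depth. -/
def PFm.depth {A : Type} : {n : ℕ} → PFm A n → ℕ
  | _, .eq _ _ => 0
  | _, .lt _ _ => 0
  | _, .letter _ _ => 0
  | _, .and φ ψ => max φ.depth ψ.depth
  | _, .not φ => φ.depth
  | _, .exlt φ => φ.depth + 1

/-- Satisfaction of a prefFO formula in a word, under an assignment of the
free variables to positions. -/
def PFm.Sat {A : Type} (w : Word A) : {n : ℕ} → PFm A n → (Fin n → ℕ) → Prop
  | _, .eq i j, ρ => ρ i = ρ j
  | _, .lt i j, ρ => ρ i < ρ j
  | _, .letter a i, ρ => w (ρ i) = some a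
  | _, .and φ ψ, ρ => PFm.Sat w φ ρ ∧ PFm.Sat w ψ ρ
  | _, .not φ, ρ => ¬ PFm.Sat w φ ρ
  | _, .exlt φ, ρ => ∃ m : ℕ, Word.pos w m ∧ m < ρ 0 ∧ PFm.Sat w φ (Fin.snoc ρ m)

/-- prefFO sentences: start by quantifying the bounding variable, and are closed
under boolean combinations. -/
inductive PSen (A : Type) : Type where
  | exB : PFm A 1 → PSen A
  | and : PSen A → PSen A → PSen A
  | not : PSen A → PSen A

/-- Quantifier depth of a sentence. -/
def PSen.depth {A : Type} : PSen A → ℕ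
  | .exB φ => φ.depth + 1
  | .and s t => max s.depth t.depth
  | .not s => s.depth

/-- Satisfaction of a prefFO sentence in a word. -/
def PSen.Sat {A : Type} (w : Word A) : PSen A → Prop
  | .exB φ => ∃ m : ℕ, Word.pos w m ∧ PFm.Sat w φ (fun _ => m)
  | .and s t => PSen.Sat w s ∧ PSen.Sat w t
  | .not s => ¬ PSen.Sat w s

/-- The prefFO `k`-type of a word: the set of prefFO sentences of quantifier
depth at most `k` it satisfies. -/
def tp {A : Type} (k : ℕ) (w : Word A) : Set (PSen A) :=
  {s | PSen.depth s ≤ k ∧ PSen.Sat w s}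

/-- `Types_k`: the set of prefFO `k`-types of finite words over `A`. -/
def WTypes (A : Type) (k : ℕ) : Set (Set (PSen A)) :=
  {T | ∃ l : List A, T = tp k (Word.ofList l)}

/-- The relation `⪯` on types: `τ ⪯ τ'` iff some finite word of type `τ` has an
extension of type `τ'`. -/
def typeLe {A : Type} (k : ℕ) (τ τ' : Set (PSen A)) : Prop :=
  ∃ u v : List A, tp k (Word.ofList u) = τ ∧ tp k (Word.ofList (u ++ v)) = τ'

/-- Two words agree on all prefFO sentences of quantifier depth at most `k`. -/
def prefEquiv {A : Type} (k : ℕ) (w w' : Word A) : Prop :=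
  ∀ s : PSen A, PSen.depth s ≤ k → (PSen.Sat w s ↔ PSen.Sat w' s)

/-! ### Full first-order logic on words -/

inductive FOFm (A : Type) : ℕ → Type where
  | eq {n} : Fin n → Fin n → FOFm A n
  | lt {n} : Fin n → Fin n → FOFm A n
  | letter {n} : A → Fin n → FOFm A n
  | and {n} : FOFm A n → FOFm A n → FOFm A n
  | not {n} : FOFm A n → FOFm A n
  | ex {n} : FOFm A (n + 1) → FOFm A n

def FOFm.depth {A : Type} : {n : ℕ} → FOFm A n → ℕ
  | _, .eq _ _ => 0
  | _, .lt _ _ => 0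
  | _, .letter _ _ => 0
  | _, .and φ ψ => max φ.depth ψ.depth
  | _, .not φ => φ.depth
  | _, .ex φ => φ.depth + 1

def FOFm.Sat {A : Type} (w : Word A) : {n : ℕ} → FOFm A n → (Fin n → ℕ) → Prop
  | _, .eq i j, ρ => ρ i = ρ j
  | _, .lt i j, ρ => ρ i < ρ j
  | _, .letter a i, ρ => w (ρ i) = some a
  | _, .and φ ψ, ρ => FOFm.Sat w φ ρ ∧ FOFm.Sat w ψ ρ
  | _, .not φ, ρ => ¬ FOFm.Sat w φ ρ
  | _, .ex φ, ρ => ∃ m : ℕ, Word.pos w m ∧ FOFm.Sat w φ (Fin.snoc ρ m)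

/-- Two words agree on all FO sentences of quantifier depth at most `k`. -/
def foEquiv {A : Type} (k : ℕ) (w w' : Word A) : Prop :=
  ∀ s : FOFm A 0, FOFm.depth s ≤ k →
    (FOFm.Sat w s Fin.elim0 ↔ FOFm.Sat w' s Fin.elim0)

/-! ### The prefix Ehrenfeucht–Fraïssé game on words

After the first (bounding) round, pebbles are kept as matched pairs of
positions: `(m, m')` with `m` in the first word and `m'` in the second. -/

/-- The agreement condition: the correspondence between pebbled positions
preserves equality, the order `<` and the letters. -/
def AgreeW {A : Type} (u v : Word A) (L : List (ℕ × ℕ)) : Prop :=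
  ∀ p ∈ L, ∀ q ∈ L,
    ((p.1 = q.1) ↔ (p.2 = q.2)) ∧ ((p.1 < q.1) ↔ (p.2 < q.2)) ∧
    (∀ a : A, u p.1 = some a ↔ v p.2 = some a)

/-- `DupWinW u v b b' r L`: with bounding pebbles placed on `b` (in `u`) and `b'`
(in `v`), and prefix pebbles `L` already placed, Duplicator wins the game with `r`
remaining rounds. -/
def DupWinW {A : Type} (u v : Word A) (b b' : ℕ) : ℕ → List (ℕ × ℕ) → Prop
  | 0, L => AgreeW u v ((b, b') :: L)
  | r + 1, L => AgreeW u v ((b, b') :: L) ∧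
      (∀ m, Word.pos u m → m < b →
        ∃ m', Word.pos v m' ∧ m' < b' ∧ DupWinW u v b b' r ((m, m') :: L)) ∧
      (∀ m', Word.pos v m' → m' < b' →
        ∃ m, Word.pos u m ∧ m < b ∧ DupWinW u v b b' r ((m, m') :: L))

/-! ### Data words -/

/-- A move of a data word: a System action together with a System process, or an
Environment action together with an Environment process. `A`, `B` are the System
and Environment alphabets; `P`, `Q` the System and Environment process sets. -/
abbrev DMove (A B P Q : Type) : Type := (A × P) ⊕ (B × Q)

/-- The process of a move. -/
def dproc {A B P Q : Type} : DMove A B P Q → P ⊕ Q :=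
  Sum.elim (fun ap => Sum.inl ap.2) (fun bq => Sum.inr bq.2)

/-- The action of a move. -/
def dact {A B P Q : Type} : DMove A B P Q → A ⊕ B :=
  Sum.elim (fun ap => Sum.inl ap.1) (fun bq => Sum.inr bq.1)

/-- The process acting at position `m` of a data word. -/
def procAt {A B P Q : Type} (d : Word (DMove A B P Q)) (m : ℕ) : Option (P ⊕ Q) :=
  (d m).map dproc

/-- The action taken at position `m` of a data word. -/
def actAt {A B P Q : Type} (d : Word (DMove A B P Q)) (m : ℕ) : Option (A ⊕ B) :=
  (d m).map dact

/-- Elements of the structure associated with a data word: one process element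
for every process, and one element for every position. -/
abbrev Elem (P Q : Type) : Type := (P ⊕ Q) ⊕ ℕ

/-- The `∼`-class (i.e. the process) of an element of a data word. -/
def classOfE {A B P Q : Type} (d : Word (DMove A B P Q)) : Elem P Q → Option (P ⊕ Q)
  | .inl q => some q
  | .inr m => procAt d m

/-! ### Prefix first-order logic on data words

`PDW A B p b x` : formulas in a context with `p` process variables, `b` bounding
variables and `x` prefix variables.  Sentences (possibly with constants, constants
being modelled as the initial free variables) are obtained by instantiating the
contexts. -/

/-- A variable of any of the three kinds. -/
abbrev DVar (p b x : ℕ) : Type := Fin p ⊕ (Fin b ⊕ Fin x)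

inductive PDW (A B : Type) : ℕ → ℕ → ℕ → Type where
  | eq {p b x} : DVar p b x → DVar p b x → PDW A B p b x
  | procS {p b x} : Fin p → PDW A B p b x
  | procE {p b x} : Fin p → PDW A B p b x
  | letter {p b x} : (A ⊕ B) → (Fin b ⊕ Fin x) → PDW A B p b x
  | lesim {p b x} : Fin x → Fin x → PDW A B p b x
  | sim {p b x} : Fin p → DVar p b x → PDW A B p b x
  | and {p b x} : PDW A B p b x → PDW A B p b x → PDW A B p b x
  | not {p b x} : PDW A B p b x → PDW A B p b x
  | exP {p b x} : PDW A B (p + 1) b x → PDW A B p b x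
  | exB {p b x} : PDW A B p (b + 1) x → PDW A B p b x
  | exX {p b x} : Fin b → PDW A B p b (x + 1) → PDW A B p b x

/-- Quantifier depth. -/
def PDW.depth {A B : Type} : {p b x : ℕ} → PDW A B p b x → ℕ
  | _, _, _, .eq _ _ => 0
  | _, _, _, .procS _ => 0
  | _, _, _, .procE _ => 0
  | _, _, _, .letter _ _ => 0
  | _, _, _, .lesim _ _ => 0
  | _, _, _, .sim _ _ => 0
  | _, _, _, .and φ ψ => max φ.depth ψ.depth
  | _, _, _, .not φ => φ.depth
  | _, _, _, .exP φ => φ.depth + 1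
  | _, _, _, .exB φ => φ.depth + 1
  | _, _, _, .exX _ φ => φ.depth + 1

/-- Interpretation of a variable as an element of the data-word structure. -/
def interpDVar {P Q : Type} {p b x : ℕ} (ρP : Fin p → P ⊕ Q) (ρB : Fin b → ℕ)
    (ρX : Fin x → ℕ) : DVar p b x → Elem P Q
  | .inl i => Sum.inl (ρP i)
  | .inr (.inl i) => Sum.inr (ρB i)
  | .inr (.inr i) => Sum.inr (ρX i)

/-- Satisfaction of a prefFO^dw formula in a data word, under assignments of the
process, bounding and prefix variables.  New bounding variables must be positions
lying in a fresh class (w.r.t. all present bounding variables), new prefix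
variables must be `≲` their associated bounding variable. -/
def PDW.Sat {A B P Q : Type} (d : Word (DMove A B P Q)) :
    {p b x : ℕ} → PDW A B p b x → (Fin p → P ⊕ Q) → (Fin b → ℕ) → (Fin x → ℕ) → Prop
  | _, _, _, .eq v w, ρP, ρB, ρX => interpDVar ρP ρB ρX v = interpDVar ρP ρB ρX w
  | _, _, _, .procS i, ρP, _, _ => ∃ q : P, ρP i = Sum.inl q
  | _, _, _, .procE i, ρP, _, _ => ∃ q : Q, ρP i = Sum.inr q
  | _, _, _, .letter a v, _, ρB, ρX => actAt d (Sum.elim ρB ρX v) = some a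
  | _, _, _, .lesim i j, _, _, ρX =>
      ρX i < ρX j ∧ ∃ q, procAt d (ρX i) = some q ∧ procAt d (ρX j) = some q
  | _, _, _, .sim i v, ρP, ρB, ρX => classOfE d (interpDVar ρP ρB ρX v) = some (ρP i)
  | _, _, _, .and φ ψ, ρP, ρB, ρX => PDW.Sat d φ ρP ρB ρX ∧ PDW.Sat d ψ ρP ρB ρX
  | _, _, _, .not φ, ρP, ρB, ρX => ¬ PDW.Sat d φ ρP ρB ρX
  | _, _, _, .exP φ, ρP, ρB, ρX => ∃ q : P ⊕ Q, PDW.Sat d φ (Fin.snoc ρP q) ρB ρX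
  | _, _, _, .exB φ, ρP, ρB, ρX => ∃ m : ℕ, d m ≠ none ∧
      (∀ j, procAt d m ≠ procAt d (ρB j)) ∧ PDW.Sat d φ ρP (Fin.snoc ρB m) ρX
  | _, _, _, .exX y φ, ρP, ρB, ρX => ∃ m : ℕ, d m ≠ none ∧ m < ρB y ∧
      procAt d m = procAt d (ρB y) ∧ PDW.Sat d φ ρP ρB (Fin.snoc ρX m)

/-- Satisfaction of a prefFO^dw sentence (no constants) in a data word. -/
def SatS {A B P Q : Type} (d : Word (DMove A B P Q)) (φ : PDW A B 0 0 0) : Prop :=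
  PDW.Sat d φ Fin.elim0 Fin.elim0 Fin.elim0

/-! ### Classes of a data word -/

/-- `m` is a position of process `q` in the data word `d`. -/
def isPosOf {A B P Q : Type} (d : Word (DMove A B P Q)) (q : P ⊕ Q) (m : ℕ) : Prop :=
  procAt d m = some q

open Classical in
/-- The class of process `q` in the data word `d`, as a (finite or infinite) word
over `A ⊕ B`: its `i`-th letter is the action taken at the `i`-th position of `q`. -/
noncomputable def classWord {A B P Q : Type} (d : Word (DMove A B P Q)) (q : P ⊕ Q) :
    Word (A ⊕ B) :=
  fun i =>
    if {m | isPosOf d q m}.Infinite ∨ i < Set.ncard {m | isPosOf d q m}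
    then actAt d (Nat.nth (isPosOf d q) i) else none

/-- The set of processes of `d` whose class has prefFO `k`-type `τ`. -/
def classesOfType {A B P Q : Type} (d : Word (DMove A B P Q)) (k : ℕ)
    (τ : Set (PSen (A ⊕ B))) : Set (P ⊕ Q) :=
  {q | tp k (classWord d q) = τ}

end PrefSynth
/-! ### The prefix Ehrenfeucht–Fraïssé game on data words (with constants) -/

namespace PrefSynth

/-- A pebble placed on a data word: a process pebble, a bounding pebble
or a prefix pebble. -/
inductive Peb (P Q : Type) : Type where
  | proc : P ⊕ Q → Peb P Q
  | bound : ℕ → Peb P Q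
  | pref : ℕ → Peb P Q

/-- The element on which a pebble is placed. -/
def Peb.elem {P Q : Type} : Peb P Q → Elem P Q
  | .proc q => Sum.inl q
  | .bound m => Sum.inr m
  | .pref m => Sum.inr m

/-- `e` is a System process element. -/
def IsProcSE {P Q : Type} (e : Elem P Q) : Prop := ∃ q : P, e = Sum.inl (Sum.inl q)

/-- `e` is an Environment process element. -/
def IsProcEE {P Q : Type} (e : Elem P Q) : Prop := ∃ q : Q, e = Sum.inl (Sum.inr q)

/-- `e` is a position labelled by the letter `a`. -/
def LetterIsE {A B P Q : Type} (d : Word (DMove A B P Q)) (e : Elem P Q) (a : A ⊕ B) :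
    Prop := ∃ m : ℕ, e = Sum.inr m ∧ actAt d m = some a

/-- `e ∼ f` in the data word `d`. -/
def SimE {A B P Q : Type} (d : Word (DMove A B P Q)) (e f : Elem P Q) : Prop :=
  ∃ q, classOfE d e = some q ∧ classOfE d f = some q

/-- `e ≲ f` in the data word `d`. -/
def LesimE {A B P Q : Type} (d : Word (DMove A B P Q)) (e f : Elem P Q) : Prop :=
  ∃ m m' : ℕ, e = Sum.inr m ∧ f = Sum.inr m' ∧ m < m' ∧ SimE d e f

/-- Agreement of a correspondence between elements of two data words: it must
preserve equality, `Proc_S`, `Proc_E`, the letters, `≲` and `∼`. -/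
def AgreeDW {A B P Q P' Q' : Type} (d : Word (DMove A B P Q))
    (d' : Word (DMove A B P' Q')) (E : List (Elem P Q × Elem P' Q')) : Prop :=
  ∀ e ∈ E, ∀ f ∈ E,
    ((e.1 = f.1) ↔ (e.2 = f.2)) ∧
    (IsProcSE e.1 ↔ IsProcSE e.2) ∧
    (IsProcEE e.1 ↔ IsProcEE e.2) ∧
    (∀ a : A ⊕ B, LetterIsE d e.1 a ↔ LetterIsE d' e.2 a) ∧
    (LesimE d e.1 f.1 ↔ LesimE d' e.2 f.2) ∧
    (SimE d e.1 f.1 ↔ SimE d' e.2 f.2)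

/-- A legal bounding move: a position whose class contains no previously placed
bounding pebble (from `l`) and no bounding constant (from `B0`). -/
def LegalBound {A B P Q : Type} (d : Word (DMove A B P Q)) (B0 : List ℕ)
    (l : List (Peb P Q)) (m : ℕ) : Prop :=
  d m ≠ none ∧ (∀ m₀ : ℕ, Peb.bound m₀ ∈ l → procAt d m ≠ procAt d m₀) ∧
    (∀ m₀ ∈ B0, procAt d m ≠ procAt d m₀)

/-- A legal prefix move: a position such that some previously placed bounding
pebble or bounding constant lies in the same class, at a later position. -/
def LegalPref {A B P Q : Type} (d : Word (DMove A B P Q)) (B0 : List ℕ)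
    (l : List (Peb P Q)) (m : ℕ) : Prop :=
  d m ≠ none ∧
    ∃ m₀ : ℕ, (Peb.bound m₀ ∈ l ∨ m₀ ∈ B0) ∧ m < m₀ ∧ procAt d m = procAt d m₀

/-- The matched pairs of elements determined by the constants `E0` and the
pebbles `L`. -/
def pairElems {P Q P' Q' : Type} (E0 : List (Elem P Q × Elem P' Q'))
    (L : List (Peb P Q × Peb P' Q')) : List (Elem P Q × Elem P' Q') :=
  E0 ++ L.map (fun pq => (pq.1.elem, pq.2.elem))

/-- `DupWinDW d d' E0 B0 B0' r L`: Duplicator wins the `r`-round prefix EF game on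
the data words `d` and `d'` with matched constant elements `E0` (the bounding
constants being interpreted by `B0` in `d` and by `B0'` in `d'`) and already
placed matched pebbles `L`. -/
def DupWinDW {A B P Q P' Q' : Type} (d : Word (DMove A B P Q))
    (d' : Word (DMove A B P' Q')) (E0 : List (Elem P Q × Elem P' Q'))
    (B0 B0' : List ℕ) : ℕ → List (Peb P Q × Peb P' Q') → Prop
  | 0, L => AgreeDW d d' (pairElems E0 L)
  | r + 1, L => AgreeDW d d' (pairElems E0 L) ∧
      (∀ q : P ⊕ Q, ∃ q' : P' ⊕ Q',
        DupWinDW d d' E0 B0 B0' r ((Peb.proc q, Peb.proc q') :: L)) ∧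
      (∀ q' : P' ⊕ Q', ∃ q : P ⊕ Q,
        DupWinDW d d' E0 B0 B0' r ((Peb.proc q, Peb.proc q') :: L)) ∧
      (∀ m : ℕ, LegalBound d B0 (L.map Prod.fst) m →
        ∃ m' : ℕ, LegalBound d' B0' (L.map Prod.snd) m' ∧
          DupWinDW d d' E0 B0 B0' r ((Peb.bound m, Peb.bound m') :: L)) ∧
      (∀ m' : ℕ, LegalBound d' B0' (L.map Prod.snd) m' →
        ∃ m : ℕ, LegalBound d B0 (L.map Prod.fst) m ∧
          DupWinDW d d' E0 B0 B0' r ((Peb.bound m, Peb.bound m') :: L)) ∧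
      (∀ m : ℕ, LegalPref d B0 (L.map Prod.fst) m →
        ∃ m' : ℕ, LegalPref d' B0' (L.map Prod.snd) m' ∧
          DupWinDW d d' E0 B0 B0' r ((Peb.pref m, Peb.pref m') :: L)) ∧
      (∀ m' : ℕ, LegalPref d' B0' (L.map Prod.snd) m' →
        ∃ m : ℕ, LegalPref d B0 (L.map Prod.fst) m ∧
          DupWinDW d d' E0 B0 B0' r ((Peb.pref m, Peb.pref m') :: L))

/-- The constants of a data word: interpretations of `cp` process constants,
`cb` bounding constants and `cx` prefix constants.  Validity: bounding and
prefix constants are positions, no two bounding constants share a class, and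
each prefix constant is `≲` some bounding constant. -/
def ValidConsts {A B P Q : Type} {cp cb cx : ℕ} (d : Word (DMove A B P Q))
    (γP : Fin cp → P ⊕ Q) (γB : Fin cb → ℕ) (γX : Fin cx → ℕ) : Prop :=
  (∀ j, d (γB j) ≠ none) ∧ (∀ j, d (γX j) ≠ none) ∧
  (∀ i j, i ≠ j → procAt d (γB i) ≠ procAt d (γB j)) ∧
  (∀ i, ∃ j, γX i < γB j ∧ procAt d (γX i) = procAt d (γB j))

/-- The matched constant elements determined by two interpretations of the same
constant symbols. -/
def constPairs {P Q P' Q' : Type} {cp cb cx : ℕ}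
    (γP : Fin cp → P ⊕ Q) (γB : Fin cb → ℕ) (γX : Fin cx → ℕ)
    (γP' : Fin cp → P' ⊕ Q') (γB' : Fin cb → ℕ) (γX' : Fin cx → ℕ) :
    List (Elem P Q × Elem P' Q') :=
  (List.ofFn fun i : Fin cp =>
    ((Sum.inl (γP i) : Elem P Q), (Sum.inl (γP' i) : Elem P' Q'))) ++
  (List.ofFn fun i : Fin cb =>
    ((Sum.inr (γB i) : Elem P Q), (Sum.inr (γB' i) : Elem P' Q'))) ++
  (List.ofFn fun i : Fin cx =>
    ((Sum.inr (γX i) : Elem P Q), (Sum.inr (γX' i) : Elem P' Q')))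

/-! ### The standard synthesis game -/

/-- A System strategy in the standard synthesis game: given the finite data word
played so far, output a System action and process, or pass (`none` plays the
role of `ε`). -/
abbrev Strat (A B P Q : Type) : Type := List (DMove A B P Q) → Option (A × P)

/-- The list of the first `n` moves of a data word. -/
def histList {M : Type} (d : Word M) (n : ℕ) : List M := (List.range n).filterMap d

/-- The data word `d` is compatible with the System strategy `σ`. -/
def CompatibleStd {A B P Q : Type} (σ : Strat A B P Q) (d : Word (DMove A B P Q)) :
    Prop :=
  ∀ i a p, d i = some (Sum.inl (a, p)) → σ (histList d i) = some (a, p)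

/-- The data word `d` is fair with respect to `σ`: either it is finite and `σ`
passes after it, or (being infinite) if `σ` wants to play infinitely often then
System actions occur infinitely often. -/
def FairStd {A B P Q : Type} (σ : Strat A B P Q) (d : Word (DMove A B P Q)) : Prop :=
  (∃ n, d n = none ∧ (∀ i, i < n → d i ≠ none) ∧ σ (histList d n) = none) ∨
  ((∀ n, d n ≠ none) ∧
    ((∀ N, ∃ i, N ≤ i ∧ σ (histList d (i + 1)) ≠ none) →
     (∀ N, ∃ i, N ≤ i ∧ ∃ a p, d i = some (Sum.inl (a, p)))))

/-- `σ` is winning for `φ` in the standard synthesis game: every compatible and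
fair data word satisfies `φ`. -/
def WinningStd {A B P Q : Type} (φ : PDW A B 0 0 0) (σ : Strat A B P Q) : Prop :=
  ∀ d : Word (DMove A B P Q), Word.Closed d → CompatibleStd σ d → FairStd σ d →
    SatS d φ

/-- System has an `(nS, nE)`-winning strategy for `φ` in the standard synthesis
game: a winning strategy whenever `|P_S| = nS` and `|P_E| = nE`. -/
def SystemWinsStd (A B : Type) (φ : PDW A B 0 0 0) (nS nE : ℕ) : Prop :=
  ∀ (P Q : Type), Finite P → Finite Q → Nat.card P = nS → Nat.card Q = nE →
    ∃ σ : Strat A B P Q, WinningStd φ σ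

/-! ### The symmetric game -/

/-- A System strategy in the symmetric game: may answer by any finite sequence
of System moves (`[]` playing the role of `ε`). -/
abbrev SymStrat (A B P Q : Type) : Type := List (DMove A B P Q) → List (A × P)

/-- The history after `n` rounds of the symmetric game, the Environment playing
the finite blocks `env 0, env 1, …` and System answering according to `σ`,
with strict alternation, Environment first. -/
def symHist {A B P Q : Type} (σ : SymStrat A B P Q) (env : ℕ → List (B × Q)) :
    ℕ → List (DMove A B P Q)
  | 0 => []
  | n + 1 =>
      let h := symHist σ env n ++ (env n).map Sum.inr
      h ++ (σ h).map Sum.inl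

/-- The data word `d` is compatible with the symmetric strategy `σ`: it is the
limit of the histories of an alternating play in which System follows `σ`. -/
def CompatibleSym {A B P Q : Type} (σ : SymStrat A B P Q)
    (d : Word (DMove A B P Q)) : Prop :=
  ∃ env : ℕ → List (B × Q),
    (∀ n i x, (symHist σ env n)[i]? = some x → d i = some x) ∧
    (∀ i, d i ≠ none → ∃ n, i < (symHist σ env n).length)

/-- Fairness in the symmetric game: if `d` is finite then `σ` passes after it. -/
def FairSym {A B P Q : Type} (σ : SymStrat A B P Q) (d : Word (DMove A B P Q)) :
    Prop :=
  ∀ n, d n = none → (∀ i, i < n → d i ≠ none) → σ (histList d n) = []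

/-- `σ` is winning for `φ` in the symmetric game. -/
def WinningSym {A B P Q : Type} (φ : PDW A B 0 0 0) (σ : SymStrat A B P Q) : Prop :=
  ∀ d : Word (DMove A B P Q), Word.Closed d → CompatibleSym σ d → FairSym σ d →
    SatS d φ

/-- System has an `(nS, nE)`-winning strategy for `φ` in the symmetric game. -/
def SystemWinsSym (A B : Type) (φ : PDW A B 0 0 0) (nS nE : ℕ) : Prop :=
  ∀ (P Q : Type), Finite P → Finite Q → Nat.card P = nS → Nat.card Q = nE →
    ∃ σ : SymStrat A B P Q, WinningSym φ σ

/-! ### The token game on types -/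

/-- A node of the arena: a prefFO `k`-type of finite words. -/
abbrev Typ (A : Type) (k : ℕ) : Type := {T : Set (PSen A) // T ∈ WTypes A k}

/-- The initial node: the type of the empty word. -/
def initTyp (A : Type) (k : ℕ) : Typ A k :=
  ⟨tp k (Word.ofList ([] : List A)), ⟨[], rfl⟩⟩

/-- The transition relation of the arena. -/
def typLe {A : Type} {k : ℕ} (τ τ' : Typ A k) : Prop := typeLe k τ.1 τ'.1

/-- A configuration: the position of each token in the arena.  `TS` and `TE` are
the sets of System and Environment tokens. -/
abbrev Conf (A : Type) (k : ℕ) (TS TE : Type) : Type := (TS ⊕ TE) → Typ A k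

/-- A System strategy in the token game: given the sequence of configurations
so far, where to move each System token. -/
abbrev TokStrat (A : Type) (k : ℕ) (TS TE : Type) : Type :=
  List (Conf A k TS TE) → TS → Typ A k

/-- A play of the token game: all tokens start on the initial node, tokens only
move along `⪯`, and the players strictly alternate, Environment first (at even
stages Environment moves, so System tokens stay put; at odd stages System moves). -/
def IsPlay {A : Type} {k : ℕ} {TS TE : Type} (conf : ℕ → Conf A k TS TE) : Prop :=
  (∀ t, conf 0 t = initTyp A k) ∧
  (∀ n t, typLe (conf n t) (conf (n + 1) t)) ∧
  (∀ n, Even n → ∀ t : TS, conf (n + 1) (Sum.inl t) = conf n (Sum.inl t)) ∧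
  (∀ n, ¬ Even n → ∀ t : TE, conf (n + 1) (Sum.inr t) = conf n (Sum.inr t))

/-- The play `conf` is compatible with the System strategy `σ`. -/
def CompatibleTok {A : Type} {k : ℕ} {TS TE : Type} (σ : TokStrat A k TS TE)
    (conf : ℕ → Conf A k TS TE) : Prop :=
  ∀ n, ¬ Even n → ∀ t : TS,
    conf (n + 1) (Sum.inl t) = σ (List.ofFn (fun i : Fin (n + 1) => conf i)) t

/-- The strategy `σ` only suggests legal moves (along `⪯`). -/
def StratLegal {A : Type} {k : ℕ} {TS TE : Type} (σ : TokStrat A k TS TE) : Prop :=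
  ∀ (h : List (Conf A k TS TE)) (hne : h ≠ []) (t : TS),
    typLe (h.getLast hne (Sum.inl t)) (σ h t)

/-- A configuration matches a `k`-counting function `c` (values `≥ k`
representing `k+`): the number of tokens on each type `τ` is exactly `c τ` when
`c τ < k`, and at least `k` otherwise. -/
def CfgMatches {A : Type} {k : ℕ} {TS TE : Type} (c : Typ A k → ℕ)
    (cfg : Conf A k TS TE) : Prop :=
  ∀ τ : Typ A k,
    (c τ < k → Nat.card {t : TS ⊕ TE // cfg t = τ} = c τ) ∧
    (¬ c τ < k → k ≤ Nat.card {t : TS ⊕ TE // cfg t = τ})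

/-- The acceptance set `Acc_φ`: the `k`-counting functions `c` such that every
data word whose numbers of classes of each prefFO `k`-type match `c` satisfies
`φ`. -/
def AccC (A B : Type) (k : ℕ) (φ : PDW A B 0 0 0) (c : Typ (A ⊕ B) k → ℕ) : Prop :=
  (∀ τ, c τ ≤ k) ∧
  ∀ (P Q : Type) (d : Word (DMove A B P Q)), Word.Closed d →
    (∀ τ : Typ (A ⊕ B) k,
      (c τ < k → Cardinal.mk ↥(classesOfType d k τ.1) = (c τ : Cardinal)) ∧
      (¬ c τ < k → (k : Cardinal) ≤ Cardinal.mk ↥(classesOfType d k τ.1))) →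
    SatS d φ

/-- The strategy `σ` is winning in the token game for `φ`: every compatible
maximal play stabilizes in a limit configuration satisfying the acceptance
condition. -/
def TokWinning {A B : Type} {k : ℕ} {TS TE : Type} (φ : PDW A B 0 0 0)
    (σ : TokStrat (A ⊕ B) k TS TE) : Prop :=
  ∀ conf : ℕ → Conf (A ⊕ B) k TS TE, IsPlay conf → CompatibleTok σ conf →
    ∃ N, (∀ n, N ≤ n → conf n = conf N) ∧
      ∃ c : Typ (A ⊕ B) k → ℕ, AccC A B k φ c ∧ CfgMatches c (conf N)

/-- The pair `(nS, nE)` is winning for System in the token game for `φ` (of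
depth `k`). -/
def SystemWinsTok (A B : Type) (k : ℕ) (φ : PDW A B 0 0 0) (nS nE : ℕ) : Prop :=
  ∀ (TS TE : Type), Finite TS → Finite TE → Nat.card TS = nS → Nat.card TE = nE →
    ∃ σ : TokStrat (A ⊕ B) k TS TE, StratLegal σ ∧ TokWinning φ σ

/-! ### An explicit encoding of prefFO^dw sentences, for decidability -/

/-- Encoding of a variable. -/
def encodeDVar {p b x : ℕ} : DVar p b x → ℕ
  | .inl i => Nat.pair 0 i.1
  | .inr (.inl i) => Nat.pair 1 i.1
  | .inr (.inr i) => Nat.pair 2 i.1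

/-- An explicit injective encoding of prefFO^dw formulas over the alphabets
`Fin m` and `Fin n` into the natural numbers. -/
def encodePDW {m n : ℕ} : {p b x : ℕ} → PDW (Fin m) (Fin n) p b x → ℕ
  | _, _, _, .eq v w => Nat.pair 0 (Nat.pair (encodeDVar v) (encodeDVar w))
  | _, _, _, .procS i => Nat.pair 1 i.1
  | _, _, _, .procE i => Nat.pair 2 i.1
  | _, _, _, .letter a v =>
      Nat.pair 3 (Nat.pair
        (Sum.elim (fun i => Nat.pair 0 i.1) (fun j => Nat.pair 1 j.1) a)
        (Sum.elim (fun i => Nat.pair 0 i.1) (fun j => Nat.pair 1 j.1) v))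
  | _, _, _, .lesim i j => Nat.pair 4 (Nat.pair i.1 j.1)
  | _, _, _, .sim i v => Nat.pair 5 (Nat.pair i.1 (encodeDVar v))
  | _, _, _, .and φ ψ => Nat.pair 6 (Nat.pair (encodePDW φ) (encodePDW ψ))
  | _, _, _, .not φ => Nat.pair 7 (encodePDW φ)
  | _, _, _, .exP φ => Nat.pair 8 (encodePDW φ)
  | _, _, _, .exB φ => Nat.pair 9 (encodePDW φ)
  | _, _, _, .exX y φ => Nat.pair 10 (Nat.pair y.1 (encodePDW φ))

end PrefSynth

namespace PrefSynth

/-!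
Let `b` be the last position of `u`. Depth-`(k+1)` prefFO equivalence gives a position `b'`
of `v` at which, as bounding position, `v` satisfies the same depth-`k` prefFO formulas as
`u` does at `b`. Relativizing FO sentences to the positions `≤ x̄` turns this into
`u ≡FO_k v[0..b']`. Finally `≡FO_k` is a right congruence: a depth-`k` sentence about
`x ++ w` is equivalent to a depth-`k` sentence about `x`, obtained by placing each quantified
position either in `x` or at one of the finitely many offsets into `w`. Appending the rest of
`v` to both sides gives `u ++ u' ≡FO_k v`, and symmetrically for `v'`.
-/

variable {A : Type}

lemma Word.pos_ofList (l : List A) (m : ℕ) : Word.pos (Word.ofList l) m ↔ m < l.length := by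
  simp [Word.pos, Word.ofList]

lemma Word.pos_take (W : Word A) (n m : ℕ) :
    Word.pos (Word.take W n) m ↔ m < n ∧ Word.pos W m := by
  by_cases h : m < n <;> simp [Word.pos, Word.take, h]

lemma Word.take_ofList (l : List A) (n : ℕ) :
    Word.take (Word.ofList l) n = Word.ofList (l.take n) := by
  funext i
  simp only [Word.take, Word.ofList, List.getElem?_take]

-- Truth constants have no depth-`0` counterpart among FO sentences.
abbrev FOFmB (A : Type) (m : ℕ) : Type := Bool ⊕ FOFm A m

namespace FOFmB

variable {m : ℕ}

def Sat (w : Word A) : FOFmB A m → (Fin m → ℕ) → Prop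
  | .inl b, _ => b = true
  | .inr φ, ρ => FOFm.Sat w φ ρ

def depth : FOFmB A m → ℕ
  | .inl _ => 0
  | .inr φ => φ.depth

def not : FOFmB A m → FOFmB A m
  | .inl b => .inl !b
  | .inr φ => .inr (.not φ)

def and : FOFmB A m → FOFmB A m → FOFmB A m
  | .inl b, r => if b then r else .inl false
  | .inr φ, .inl b => if b then .inr φ else .inl false
  | .inr φ, .inr ψ => .inr (.and φ ψ)

def or (r s : FOFmB A m) : FOFmB A m := (r.not.and s.not).not

def bigOr (l : List (FOFmB A m)) : FOFmB A m := l.foldr or (.inl false)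

-- `∃ y, true` is not `true` on the empty word.
def ex : FOFmB A (m + 1) → FOFmB A m
  | .inl false => .inl false
  | .inl true => .inr (.ex (.eq (Fin.last m) (Fin.last m)))
  | .inr φ => .inr (.ex φ)

variable (w : Word A) (ρ : Fin m → ℕ)

@[simp] lemma sat_not (r : FOFmB A m) : Sat w r.not ρ ↔ ¬ Sat w r ρ := by
  cases r <;> simp [Sat, not, FOFm.Sat]

@[simp] lemma sat_and (r s : FOFmB A m) : Sat w (r.and s) ρ ↔ Sat w r ρ ∧ Sat w s ρ := by
  rcases r with (_ | _) | φ <;> rcases s with (_ | _) | ψ <;> simp [Sat, and, FOFm.Sat]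

@[simp] lemma sat_or (r s : FOFmB A m) : Sat w (r.or s) ρ ↔ Sat w r ρ ∨ Sat w s ρ := by
  simp [or, or_iff_not_and_not]

lemma sat_bigOr (l : List (FOFmB A m)) : Sat w (bigOr l) ρ ↔ ∃ r ∈ l, Sat w r ρ := by
  induction l with
  | nil => simp [bigOr, Sat]
  | cons r l ih => simp_all [bigOr]

lemma sat_ex (r : FOFmB A (m + 1)) :
    Sat w r.ex ρ ↔ ∃ y, Word.pos w y ∧ Sat w r (Fin.snoc ρ y) := by
  rcases r with (_ | _) | φ <;> simp [Sat, ex, FOFm.Sat]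

lemma depth_not (r : FOFmB A m) : r.not.depth = r.depth := by
  cases r <;> rfl

lemma depth_and_le (r s : FOFmB A m) : (r.and s).depth ≤ max r.depth s.depth := by
  rcases r with (_ | _) | φ <;> rcases s with (_ | _) | ψ <;> simp [depth, and, FOFm.depth]

lemma depth_or_le (r s : FOFmB A m) : (r.or s).depth ≤ max r.depth s.depth := by
  simpa only [or, depth_not] using depth_and_le r.not s.not

lemma depth_bigOr_le {k : ℕ} (l : List (FOFmB A m)) (h : ∀ r ∈ l, r.depth ≤ k) :
    (bigOr l).depth ≤ k := by
  induction l with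
  | nil => simp [bigOr, depth]
  | cons r l ih =>
    simp only [List.mem_cons, forall_eq_or_imp] at h
    exact (depth_or_le _ _).trans (max_le h.1 (ih h.2))

lemma depth_ex_le (r : FOFmB A (m + 1)) : r.ex.depth ≤ r.depth + 1 := by
  rcases r with (_ | _) | φ <;> simp [depth, ex, FOFm.depth]

end FOFmB

section ElimSuffix

variable {m : ℕ}

/-! Placements `Fin m ⊕ ℕ` put a variable of a formula about `x ++ w` either at a
variable of a formula about `x` (`.inl`) or at an offset into `w` (`.inr`). -/

def eqAtom : Fin m ⊕ ℕ → Fin m ⊕ ℕ → FOFmB A m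
  | .inl i, .inl j => .inr (.eq i j)
  | .inr s, .inr t => .inl (decide (s = t))
  | _, _ => .inl false

def ltAtom : Fin m ⊕ ℕ → Fin m ⊕ ℕ → FOFmB A m
  | .inl i, .inl j => .inr (.lt i j)
  | .inr s, .inr t => .inl (decide (s < t))
  | .inl _, .inr _ => .inl true
  | .inr _, .inl _ => .inl false

def letterAtom [DecidableEq A] (w : List A) (a : A) : Fin m ⊕ ℕ → FOFmB A m
  | .inl i => .inr (.letter a i)
  | .inr t => .inl (decide (w[t]? = some a))

def liftPlacement {n : ℕ} (p : Fin n → Fin m ⊕ ℕ) : Fin (n + 1) → Fin (m + 1) ⊕ ℕ :=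
  Fin.snoc (Sum.map Fin.castSucc id ∘ p) (.inl (Fin.last m))

def FOFm.elimSuffix [DecidableEq A] (w : List A) :
    {n m : ℕ} → (Fin n → Fin m ⊕ ℕ) → FOFm A n → FOFmB A m
  | _, _, p, .eq i j => eqAtom (p i) (p j)
  | _, _, p, .lt i j => ltAtom (p i) (p j)
  | _, _, p, .letter a i => letterAtom w a (p i)
  | _, _, p, .and φ ψ => (φ.elimSuffix w p).and (ψ.elimSuffix w p)
  | _, _, p, .not φ => (φ.elimSuffix w p).not
  | _, _, p, .ex φ =>
      (φ.elimSuffix w (liftPlacement p)).ex.or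
        (FOFmB.bigOr ((List.range w.length).map fun t => φ.elimSuffix w (Fin.snoc p (.inr t))))

lemma depth_eqAtom (a b : Fin m ⊕ ℕ) : (eqAtom a b : FOFmB A m).depth = 0 := by
  rcases a with _ | _ <;> rcases b with _ | _ <;> rfl

lemma depth_ltAtom (a b : Fin m ⊕ ℕ) : (ltAtom a b : FOFmB A m).depth = 0 := by
  rcases a with _ | _ <;> rcases b with _ | _ <;> rfl

lemma depth_letterAtom [DecidableEq A] (w : List A) (c : A) (a : Fin m ⊕ ℕ) :
    (letterAtom w c a).depth = 0 := by
  rcases a with _ | _ <;> rfl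

lemma FOFm.depth_elimSuffix_le [DecidableEq A] (w : List A) {n : ℕ}
    (p : Fin n → Fin m ⊕ ℕ) (φ : FOFm A n) : (φ.elimSuffix w p).depth ≤ φ.depth := by
  induction φ generalizing m with
  | eq i j => exact (depth_eqAtom _ _).le
  | lt i j => exact (depth_ltAtom _ _).le
  | letter a i => exact (depth_letterAtom w _ _).le
  | and φ ψ ihφ ihψ =>
    exact (FOFmB.depth_and_le _ _).trans (max_le_max (ihφ p) (ihψ p))
  | not φ ih => exact (FOFmB.depth_not _).trans_le (ih p)
  | ex φ ih =>
    refine (FOFmB.depth_or_le _ _).trans (max_le ?_ (FOFmB.depth_bigOr_le _ ?_))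
    · exact (FOFmB.depth_ex_le _).trans (Nat.succ_le_succ (ih _))
    · simp only [List.mem_map, forall_exists_index, and_imp, forall_apply_eq_imp_iff₂]
      exact fun t _ => (ih _).trans (Nat.le_succ _)

section Atoms

variable (x : List A) {ρ : Fin m → ℕ} (hρ : ∀ j, ρ j < x.length) (a b : Fin m ⊕ ℕ)
include hρ

lemma sat_eqAtom : FOFmB.Sat (Word.ofList x) (eqAtom a b) ρ ↔
    Sum.elim ρ (x.length + ·) a = Sum.elim ρ (x.length + ·) b := by
  rcases a with i | s <;> rcases b with j | t <;> simp [eqAtom, FOFmB.Sat, FOFm.Sat]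
  · have := hρ i; omega
  · have := hρ j; omega

lemma sat_ltAtom : FOFmB.Sat (Word.ofList x) (ltAtom a b) ρ ↔
    Sum.elim ρ (x.length + ·) a < Sum.elim ρ (x.length + ·) b := by
  rcases a with i | s <;> rcases b with j | t <;> simp [ltAtom, FOFmB.Sat, FOFm.Sat]
  · have := hρ i; omega
  · have := hρ j; omega

lemma sat_letterAtom [DecidableEq A] (w : List A) (c : A) :
    FOFmB.Sat (Word.ofList x) (letterAtom w c a) ρ ↔
      Word.ofList (x ++ w) (Sum.elim ρ (x.length + ·) a) = some c := by
  rcases a with i | t <;> simp [letterAtom, FOFmB.Sat, FOFm.Sat, Word.ofList,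
    List.getElem?_append_left (hρ _), List.getElem?_append_right]

end Atoms

lemma elim_comp_liftPlacement {n : ℕ} (p : Fin n → Fin m ⊕ ℕ) (ρ : Fin m → ℕ) (f : ℕ → ℕ)
    (y : ℕ) : Sum.elim (Fin.snoc ρ y) f ∘ liftPlacement p = Fin.snoc (Sum.elim ρ f ∘ p) y := by
  rw [liftPlacement, Fin.comp_snoc, ← Function.comp_assoc, Sum.elim_comp_map]
  simp

lemma FOFm.sat_append_iff_elimSuffix [DecidableEq A] (x w : List A) {n : ℕ} (φ : FOFm A n)
    (p : Fin n → Fin m ⊕ ℕ) (ρ : Fin m → ℕ) (hρ : ∀ j, ρ j < x.length) :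
    FOFm.Sat (Word.ofList (x ++ w)) φ (Sum.elim ρ (x.length + ·) ∘ p) ↔
      FOFmB.Sat (Word.ofList x) (φ.elimSuffix w p) ρ := by
  induction φ generalizing m with
  | eq i j => exact (sat_eqAtom x hρ _ _).symm
  | lt i j => exact (sat_ltAtom x hρ _ _).symm
  | letter a i => exact (sat_letterAtom x hρ _ w a).symm
  | and φ ψ ihφ ihψ =>
    simp only [FOFm.Sat, FOFm.elimSuffix, FOFmB.sat_and, ihφ p ρ hρ, ihψ p ρ hρ]
  | not φ ih => simp only [FOFm.Sat, FOFm.elimSuffix, FOFmB.sat_not, ih p ρ hρ]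
  | ex φ ih =>
    simp only [FOFm.Sat, FOFm.elimSuffix, FOFmB.sat_or, FOFmB.sat_ex, FOFmB.sat_bigOr,
      Word.pos_ofList, List.length_append, exists_lt_add_iff_lt_left, List.mem_map,
      List.mem_range, exists_exists_and_eq_and]
    refine or_congr (exists_congr fun y => and_congr_right fun hy => ?_) ?_
    · have hρy : ∀ j, (Fin.snoc ρ y : Fin (m + 1) → ℕ) j < x.length := fun j => by
        induction j using Fin.lastCases <;> simp [hy, hρ]
      rw [← ih _ _ hρy, elim_comp_liftPlacement]
    · exact exists_congr fun t => and_congr_right fun _ => by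
        rw [← ih _ ρ hρ, Fin.comp_snoc, Sum.elim_inr]

end ElimSuffix

lemma foEquiv_append_right {k : ℕ} {x y : List A} (w : List A)
    (h : foEquiv k (Word.ofList x) (Word.ofList y)) :
    foEquiv k (Word.ofList (x ++ w)) (Word.ofList (y ++ w)) := by
  classical
  intro S hS
  let p₀ : Fin 0 → Fin 0 ⊕ ℕ := Fin.elim0
  have hx := S.sat_append_iff_elimSuffix x w p₀ Fin.elim0 (fun j => j.elim0)
  have hy := S.sat_append_iff_elimSuffix y w p₀ Fin.elim0 (fun j => j.elim0)
  rw [Subsingleton.elim (_ ∘ _) Fin.elim0] at hx hy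
  rw [hx, hy]
  rcases hr : S.elimSuffix w p₀ with _ | ψ
  · rfl
  · refine h ψ ?_
    have := (S.depth_elimSuffix_le w p₀).trans hS
    rwa [hr] at this

def PFm.or {n : ℕ} (φ ψ : PFm A n) : PFm A n := .not (.and (.not φ) (.not ψ))

lemma PFm.sat_or (w : Word A) {n : ℕ} (φ ψ : PFm A n) (ρ : Fin n → ℕ) :
    PFm.Sat w (φ.or ψ) ρ ↔ PFm.Sat w φ ρ ∨ PFm.Sat w ψ ρ := by
  simp only [PFm.or, PFm.Sat]
  tauto

def PFm.bigAnd {n : ℕ} (l : List (PFm A (n + 1))) : PFm A (n + 1) := l.foldr .and (.eq 0 0)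

lemma PFm.sat_bigAnd (w : Word A) {n : ℕ} (l : List (PFm A (n + 1))) (ρ : Fin (n + 1) → ℕ) :
    PFm.Sat w (bigAnd l) ρ ↔ ∀ φ ∈ l, PFm.Sat w φ ρ := by
  induction l with
  | nil => simp [bigAnd, PFm.Sat]
  | cons φ l ih => simp [bigAnd, PFm.Sat, ← ih]

lemma PFm.depth_bigAnd_le {n k : ℕ} (l : List (PFm A (n + 1))) (h : ∀ φ ∈ l, φ.depth ≤ k) :
    (bigAnd l).depth ≤ k := by
  induction l with
  | nil => simp [bigAnd, PFm.depth]
  | cons φ l ih =>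
    simp only [List.mem_cons, forall_eq_or_imp] at h
    exact max_le h.1 (ih h.2)

/-- Relativization of FO formulas to the prefix of a word ending at the bounding position
(variable `0`): a quantified position lies either below the bounding position or on it. -/
def FOFm.relativize : {n m : ℕ} → (Fin n → Fin (m + 1)) → FOFm A n → PFm A (m + 1)
  | _, _, p, .eq i j => .eq (p i) (p j)
  | _, _, p, .lt i j => .lt (p i) (p j)
  | _, _, p, .letter a i => .letter a (p i)
  | _, _, p, .and φ ψ => .and (φ.relativize p) (ψ.relativize p)
  | _, _, p, .not φ => .not (φ.relativize p)
  | _, _, p, .ex φ =>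
      (PFm.exlt (φ.relativize (Fin.snoc (Fin.castSucc ∘ p) (Fin.last _)))).or
        (φ.relativize (Fin.snoc p 0))

lemma FOFm.depth_relativize_le {n m : ℕ} (p : Fin n → Fin (m + 1)) (φ : FOFm A n) :
    (φ.relativize p).depth ≤ φ.depth := by
  induction φ generalizing m with
  | eq | lt | letter => exact le_rfl
  | and φ ψ ihφ ihψ => exact max_le_max (ihφ p) (ihψ p)
  | not φ ih => exact ih p
  | ex φ ih =>
    exact max_le (Nat.succ_le_succ (ih _)) ((ih _).trans (Nat.le_succ _))

lemma FOFm.sat_take_iff_relativize (W : Word A) {b : ℕ} (hb : Word.pos W b) {n m : ℕ}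
    (φ : FOFm A n) (p : Fin n → Fin (m + 1)) (ρ : Fin (m + 1) → ℕ) (hρ₀ : ρ 0 = b)
    (hρ : ∀ j, ρ j ≤ b) :
    FOFm.Sat (Word.take W (b + 1)) φ (ρ ∘ p) ↔ PFm.Sat W (φ.relativize p) ρ := by
  induction φ generalizing m with
  | eq i j => rfl
  | lt i j => rfl
  | letter a i =>
    simp only [FOFm.Sat, FOFm.relativize, PFm.Sat, Function.comp_apply, Word.take,
      if_pos (Nat.lt_succ_of_le (hρ (p i)))]
  | and φ ψ ihφ ihψ =>
    simp only [FOFm.Sat, FOFm.relativize, PFm.Sat, ihφ p ρ hρ₀ hρ, ihψ p ρ hρ₀ hρ]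
  | not φ ih => simp only [FOFm.Sat, FOFm.relativize, PFm.Sat, ih p ρ hρ₀ hρ]
  | ex φ ih =>
    simp only [FOFm.Sat, FOFm.relativize, PFm.sat_or, PFm.Sat, Word.pos_take, and_assoc,
      Nat.exists_lt_succ_right, hρ₀]
    refine or_congr (exists_congr fun y => ?_) ?_
    · rw [and_left_comm]
      refine and_congr_right fun _ => and_congr_right fun hy => ?_
      have hρy : ∀ j, (Fin.snoc ρ y : Fin (m + 2) → ℕ) j ≤ b := fun j => by
        induction j using Fin.lastCases <;> simp [hρ, hy.le]
      rw [← ih _ _ (by simp [hρ₀]) hρy, Fin.comp_snoc, ← Function.comp_assoc,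
        Fin.snoc_comp_castSucc, Fin.snoc_last]
    · rw [← ih _ ρ hρ₀ hρ, Fin.comp_snoc, hρ₀]
      simp [hb]

lemma foEquiv_take_of_sat_iff {k : ℕ} {W W' : Word A} {b b' : ℕ} (hb : Word.pos W b)
    (hb' : Word.pos W' b') (h : ∀ φ : PFm A 1, φ.depth ≤ k →
      (PFm.Sat W φ (fun _ => b) ↔ PFm.Sat W' φ (fun _ => b'))) :
    foEquiv k (Word.take W (b + 1)) (Word.take W' (b' + 1)) := by
  intro S hS
  let p₀ : Fin 0 → Fin 1 := Fin.elim0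
  have hW := S.sat_take_iff_relativize W hb p₀ (fun _ => b) rfl fun _ => le_rfl
  have hW' := S.sat_take_iff_relativize W' hb' p₀ (fun _ => b') rfl fun _ => le_rfl
  rw [Subsingleton.elim (_ ∘ _) Fin.elim0] at hW hW'
  rw [hW, hW']
  exact h _ ((S.depth_relativize_le p₀).trans hS)

/-- Since `v` is finite, the formulas separating `b` from each position of `v` have a
conjunction, whose existential closure has depth `k + 1`. -/
lemma exists_sat_iff_of_prefEquiv {k : ℕ} {W : Word A} {v : List A}
    (h : prefEquiv (k + 1) W (Word.ofList v)) {b : ℕ} (hb : Word.pos W b) :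
    ∃ b', Word.pos (Word.ofList v) b' ∧ ∀ φ : PFm A 1, φ.depth ≤ k →
      (PFm.Sat W φ (fun _ => b) ↔ PFm.Sat (Word.ofList v) φ (fun _ => b')) := by
  by_contra! hcon
  have separate : ∀ b' : Fin v.length, ∃ φ : PFm A 1, φ.depth ≤ k ∧
      PFm.Sat W φ (fun _ => b) ∧ ¬ PFm.Sat (Word.ofList v) φ (fun _ => b') := by
    intro b'
    obtain ⟨φ, hφ, hne⟩ := hcon b' ((Word.pos_ofList v b').mpr b'.2)
    rcases hne with ⟨hWφ, hvφ⟩ | ⟨hWφ, hvφ⟩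
    · exact ⟨φ, hφ, hWφ, hvφ⟩
    · exact ⟨.not φ, hφ, hWφ, not_not.mpr hvφ⟩
  choose F hFk hFW hFv using separate
  let χ := PFm.bigAnd (List.ofFn F)
  have hχk : (PSen.exB χ).depth ≤ k + 1 :=
    Nat.succ_le_succ (PFm.depth_bigAnd_le _ (by simpa [List.mem_ofFn] using hFk))
  have hWχ : PSen.Sat W (.exB χ) :=
    ⟨b, hb, (PFm.sat_bigAnd _ _ _).mpr (by simpa [List.mem_ofFn] using hFW)⟩
  obtain ⟨b', hb', hvχ⟩ := (h _ hχk).mp hWχ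
  have hb'v := (Word.pos_ofList v b').mp hb'
  exact hFv ⟨b', hb'v⟩ ((PFm.sat_bigAnd _ _ _).mp hvχ _ (List.mem_ofFn.mpr ⟨_, rfl⟩))

lemma eq_nil_of_prefEquiv_nil {k : ℕ} {v : List A}
    (h : prefEquiv (k + 1) (Word.ofList []) (Word.ofList v)) : v = [] := by
  by_contra hv
  have hdepth : (PSen.exB (PFm.eq (A := A) 0 0)).depth ≤ k + 1 := by
    simp [PSen.depth, PFm.depth]
  obtain ⟨m, hm, -⟩ := (h _ hdepth).mpr
    ⟨0, (Word.pos_ofList v 0).mpr (List.length_pos_iff.mpr hv), rfl⟩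
  simp [Word.pos_ofList] at hm

lemma exists_append_foEquiv_of_prefEquiv {k : ℕ} {u v : List A}
    (h : prefEquiv (k + 1) (Word.ofList u) (Word.ofList v)) :
    ∃ u', foEquiv k (Word.ofList (u ++ u')) (Word.ofList v) := by
  rcases u.eq_nil_or_concat' with rfl | ⟨u₀, a, rfl⟩
  · exact ⟨[], by rw [eq_nil_of_prefEquiv_nil h]; exact fun _ _ => Iff.rfl⟩
  have hb : Word.pos (Word.ofList (u₀ ++ [a])) u₀.length := by simp [Word.pos_ofList]
  obtain ⟨b', hb', hiff⟩ := exists_sat_iff_of_prefEquiv h hb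
  have hprefix := foEquiv_take_of_sat_iff hb hb' hiff
  rw [Word.take_ofList, Word.take_ofList, List.take_of_length_le (by simp)] at hprefix
  refine ⟨v.drop (b' + 1), ?_⟩
  simpa using foEquiv_append_right (v.drop (b' + 1)) hprefix

theorem prefEquiv_imp_foEquiv_extensions_general {A : Type} (k : ℕ)
    (u v : List A) (h : prefEquiv (k + 1) (Word.ofList u) (Word.ofList v)) :
    ∃ u' v' : List A,
      foEquiv k (Word.ofList (u ++ u')) (Word.ofList v) ∧
      foEquiv k (Word.ofList u) (Word.ofList (v ++ v')) := by
  obtain ⟨u', hu'⟩ := exists_append_foEquiv_of_prefEquiv h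
  obtain ⟨v', hv'⟩ := exists_append_foEquiv_of_prefEquiv fun s hs => (h s hs).symm
  exact ⟨u', v', hu', fun S hS => (hv' S hS).symm⟩

/-- If `u ≡prefFO_{k+1} v` then there exist finite words `u'`,
`v'` such that `u·u' ≡FO_k v` and `u ≡FO_k v·v'`. -/
theorem prefEquiv_imp_foEquiv_extensions {A : Type} [Finite A] (k : ℕ)
    (u v : List A) (h : prefEquiv (k + 1) (Word.ofList u) (Word.ofList v)) :
    ∃ u' v' : List A,
      foEquiv k (Word.ofList (u ++ u')) (Word.ofList v) ∧
      foEquiv k (Word.ofList u) (Word.ofList (v ++ v')) :=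
  prefEquiv_imp_foEquiv_extensions_general k u v h

end PrefSynth
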